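/- For all a ∈ ℕ and all t ≥ a+1, the interim λ-weighted synthetic gradients satisfy the one-step horizon-extension identity G_a^{λ|t+1} = G_a^{λ|t} + (λγ)^{t−a} δ'_{a,t}. -/

import Mathlib

open Finset Matrix

noncomputable section

/-- Propagator `Pfrom J a n = P(a+n, a) = J_{a+n-1} ⋯ J_a`. -/
def Pfrom {d : ℕ} (J : ℕ → Matrix (Fin d) (Fin d) ℝ) (a : ℕ) : ℕ → Matrix (Fin d) (Fin d) ℝ
  | 0 => 1
  | n + 1 => J (a + n) * Pfrom J a n

/-- Propagator `P J b a = P(b, a) = J_{b-1} ⋯ J_a` (for `b ≥ a`). -/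
def P {d : ℕ} (J : ℕ → Matrix (Fin d) (Fin d) ℝ) (b a : ℕ) : Matrix (Fin d) (Fin d) ℝ :=
  Pfrom J a (b - a)

/-- The n-step synthetic gradient `G_a^{(n)}`. -/
def Gn {d : ℕ} (γ : ℝ) (J : ℕ → Matrix (Fin d) (Fin d) ℝ) (c u : ℕ → Fin d → ℝ)
    (a n : ℕ) : Fin d → ℝ :=
  (∑ k ∈ Finset.range n, γ ^ k • Matrix.vecMul (c (a + k + 1)) (P J (a + k + 1) a))
    + γ ^ n • Matrix.vecMul (u (a + n)) (P J (a + n) a)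

/-- The interim λ-weighted synthetic gradient `G_a^{λ|H}`. -/
def GLam {d : ℕ} (γ lam : ℝ) (J : ℕ → Matrix (Fin d) (Fin d) ℝ) (c u : ℕ → Fin d → ℝ)
    (a H : ℕ) : Fin d → ℝ :=
  (1 - lam) • (∑ n ∈ Finset.range (H - a - 1), lam ^ n • Gn γ J c u a (n + 1))
    + lam ^ (H - a - 1) • Gn γ J c u a (H - a)

/-- The modified temporal-difference error `δ'_{a,t}`. -/
def δ' {d : ℕ} (γ : ℝ) (J : ℕ → Matrix (Fin d) (Fin d) ℝ) (c u : ℕ → Fin d → ℝ)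
    (a t : ℕ) : Fin d → ℝ :=
  Matrix.vecMul (c (t + 1) + γ • u (t + 1)) (P J (t + 1) a) - Matrix.vecMul (u t) (P J t a)

/-- The temporal-difference error `δ_t`. -/
def δtd {d : ℕ} (γ : ℝ) (J : ℕ → Matrix (Fin d) (Fin d) ℝ) (c u w : ℕ → Fin d → ℝ)
    (t : ℕ) : Fin d → ℝ :=
  Matrix.vecMul (c (t + 1) + γ • u (t + 1)) (P J (t + 1) t) - w t

/-- `δ_{a,t} = δ_t P(t,a)`. -/
def δab {d : ℕ} (γ : ℝ) (J : ℕ → Matrix (Fin d) (Fin d) ℝ) (c u w : ℕ → Fin d → ℝ)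
    (a t : ℕ) : Fin d → ℝ :=
  Matrix.vecMul (δtd γ J c u w t) (P J t a)

section

variable {d : ℕ} (γ lam : ℝ) (J : ℕ → Matrix (Fin d) (Fin d) ℝ) (c u : ℕ → Fin d → ℝ) (a : ℕ)

theorem Gn_succ (n : ℕ) :
    Gn γ J c u a (n + 1) = Gn γ J c u a n + γ ^ n • δ' γ J c u a (a + n) := by
  simp only [Gn, δ', Finset.sum_range_succ, Matrix.add_vecMul, Matrix.smul_vecMul,
    smul_sub, smul_add, smul_smul, pow_succ, add_assoc]
  module

theorem GLam_add_add_one (n : ℕ) :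
    GLam γ lam J c u a (a + n + 1)
      = (1 - lam) • (∑ i ∈ Finset.range n, lam ^ i • Gn γ J c u a (i + 1))
        + lam ^ n • Gn γ J c u a (n + 1) := by
  rw [GLam, show a + n + 1 - a - 1 = n by omega, show a + n + 1 - a = n + 1 by omega]

/-- Moving the horizon by one turns the tail weight `λⁿ` of `G⁽ⁿ⁺¹⁾` into
`(1 - λ) λⁿ` and adds `λⁿ⁺¹ G⁽ⁿ⁺²⁾`; since `G⁽ⁿ⁺²⁾ = G⁽ⁿ⁺¹⁾ + γⁿ⁺¹ δ'`, the `G⁽ⁿ⁺¹⁾` terms cancel. -/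
theorem GLam_add_add_one_succ (n : ℕ) :
    GLam γ lam J c u a (a + n + 1 + 1)
      = GLam γ lam J c u a (a + n + 1) + (lam * γ) ^ (n + 1) • δ' γ J c u a (a + n + 1) := by
  rw [show a + n + 1 + 1 = a + (n + 1) + 1 by omega, GLam_add_add_one, GLam_add_add_one,
    Finset.sum_range_succ, Gn_succ γ J c u a (n + 1), ← add_assoc, mul_pow]
  simp only [smul_add, smul_smul]
  module

end

theorem interim_lambda_horizon_extension_general {d : ℕ} (γ lam : ℝ)
    (J : ℕ → Matrix (Fin d) (Fin d) ℝ) (c u : ℕ → Fin d → ℝ)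
    (a t : ℕ) (h : a + 1 ≤ t) :
    GLam γ lam J c u a (t + 1)
      = GLam γ lam J c u a t + (lam * γ) ^ (t - a) • δ' γ J c u a t := by
  obtain ⟨n, rfl⟩ : ∃ n, t = a + n + 1 := ⟨t - a - 1, by omega⟩
  rw [show a + n + 1 - a = n + 1 by omega]
  exact GLam_add_add_one_succ γ lam J c u a n

/-- one-step horizon-extension identity for the interim
λ-weighted synthetic gradient: `G_a^{λ|t+1} = G_a^{λ|t} + (λγ)^{t−a} δ'_{a,t}`. -/
theorem interim_lambda_horizon_extension {d : ℕ} (γ lam : ℝ)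
    (J : ℕ → Matrix (Fin d) (Fin d) ℝ) (c u w : ℕ → Fin d → ℝ)
    (a t : ℕ) (h : a + 1 ≤ t) :
    GLam γ lam J c u a (t + 1)
      = GLam γ lam J c u a t + (lam * γ) ^ (t - a) • δ' γ J c u a t :=
  interim_lambda_horizon_extension_general γ lam J c u a t h

end
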